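/- arXiv:2302.13713 — 6 statements merged into one kernel-verified Lean document; each statement's English description precedes it below -/
import Mathlib

section
/- For all positive integers r and n, every r-edge-coloring c of the complete graph on [n] has a twin of size at least ⌊n/(r²+1)⌋; in particular F_r(n) ≥ ⌊n/(r²+1)⌋ = n/(r²+1) − O_r(1). -/
/-- `I, J` form a twin with respect to the edge-coloring `c` of the complete graph on `[n]`:
they are disjoint, have the same size, and consecutive pairs get matching colors. -/
def IsTwin {n r : ℕ} (c : Sym2 (Fin n) → Fin r) (I J : Finset (Fin n)) : Prop :=
  Disjoint I J ∧ I.card = J.card ∧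
    ∀ (t : ℕ) (hI : t + 1 < I.card) (hJ : t + 1 < J.card),
      c s(I.orderEmbOfFin rfl ⟨t, Nat.lt_of_succ_lt hI⟩, I.orderEmbOfFin rfl ⟨t + 1, hI⟩) =
      c s(J.orderEmbOfFin rfl ⟨t, Nat.lt_of_succ_lt hJ⟩, J.orderEmbOfFin rfl ⟨t + 1, hJ⟩)

/-- `f(c)`: the maximum size of a twin with respect to `c`. -/
noncomputable def maxTwinSize {n r : ℕ} (c : Sym2 (Fin n) → Fin r) : ℕ :=
  sSup {ℓ : ℕ | ∃ I J : Finset (Fin n), IsTwin c I J ∧ I.card = ℓ}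

/-- `F_r(n)`: the minimum of `f(c)` over all `r`-edge-colorings `c` of `K_n`. -/
noncomputable def Fgen (n r : ℕ) : ℕ :=
  sInf {m : ℕ | ∃ c : Sym2 (Fin n) → Fin r, maxTwinSize c = m}

section TwinAux

variable {n r : ℕ}

private lemma finCons_strictMono {k : ℕ} {v : Fin n} {f : Fin k → Fin n}
    (hf : StrictMono f) (hv : ∀ i, v < f i) :
    StrictMono (Fin.cons v f : Fin (k + 1) → Fin n) := by
  intro i j hij
  induction j using Fin.cases with
  | zero => exact absurd hij (Fin.not_lt_zero _)
  | succ j' =>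
    induction i using Fin.cases with
    | zero => simpa using hv j'
    | succ i' =>
      simp only [Fin.cons_succ]
      exact hf (Fin.succ_lt_succ_iff.mp hij)

/-- Main backward induction: for each `k ≥ 1`, if there is room for `k` blocks of size
`r²+1` starting at position `lo`, then there is a set `W` of at least `r+1` vertices
inside the first block such that every ordered pair of distinct vertices of `W` starts
a twin of size `k`. -/
private lemma twin_blocks (hr : 1 ≤ r) (c : Sym2 (Fin n) → Fin r) :
    ∀ k : ℕ, ∀ hk : 1 ≤ k, ∀ lo : ℕ, lo + k * (r ^ 2 + 1) ≤ n →
      ∃ W : Finset (Fin n),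
        (∀ x ∈ W, lo ≤ (x : ℕ) ∧ (x : ℕ) < lo + (r ^ 2 + 1)) ∧
        r + 1 ≤ W.card ∧
        (∀ v ∈ W, ∀ v' ∈ W, v ≠ v' →
          ∃ f g : Fin k → Fin n, StrictMono f ∧ StrictMono g ∧
            (∀ i j, f i ≠ g j) ∧
            f ⟨0, hk⟩ = v ∧ g ⟨0, hk⟩ = v' ∧
            (∀ t : ℕ, ∀ h1 : t + 1 < k,
              c s(f ⟨t, Nat.lt_of_succ_lt h1⟩, f ⟨t + 1, h1⟩) =
              c s(g ⟨t, Nat.lt_of_succ_lt h1⟩, g ⟨t + 1, h1⟩))) := by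
  intro k hk
  induction k, hk using Nat.le_induction with
  | base =>
    intro lo hlo
    rw [one_mul] at hlo
    have hbound : ∀ a ∈ Finset.Ico lo (lo + (r ^ 2 + 1)), a < n := by
      intro a ha
      have := (Finset.mem_Ico.mp ha).2
      omega
    refine ⟨(Finset.Ico lo (lo + (r ^ 2 + 1))).attachFin hbound, ?_, ?_, ?_⟩
    · intro x hx
      have := Finset.mem_Ico.mp ((Finset.mem_attachFin _).mp hx)
      exact this
    · rw [Finset.card_attachFin, Nat.card_Ico]
      have h2 : r ≤ r ^ 2 := Nat.le_self_pow two_ne_zero r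
      omega
    · intro v _ v' _ hvv'
      refine ⟨fun _ => v, fun _ => v', ?_, ?_, ?_, rfl, rfl, ?_⟩
      · intro a b hab
        exact absurd (Subsingleton.elim a b ▸ hab) (lt_irrefl _)
      · intro a b hab
        exact absurd (Subsingleton.elim a b ▸ hab) (lt_irrefl _)
      · intro i j
        exact hvv'
      · intro t h1
        omega
  | succ k hk ih =>
    intro lo hlo
    have hmul : (k + 1) * (r ^ 2 + 1) = (r ^ 2 + 1) + k * (r ^ 2 + 1) := by ring
    have hlo' : (lo + (r ^ 2 + 1)) + k * (r ^ 2 + 1) ≤ n := by omega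
    obtain ⟨W', hW'pos, hW'card, hW'pair⟩ := ih (lo + (r ^ 2 + 1)) hlo'
    -- the fresh block
    have hblock : lo + (r ^ 2 + 1) ≤ n := by
      have hkpos : 0 < k * (r ^ 2 + 1) := by positivity
      omega
    have hbound : ∀ a ∈ Finset.Ico lo (lo + (r ^ 2 + 1)), a < n := by
      intro a ha
      have := (Finset.mem_Ico.mp ha).2
      omega
    set B : Finset (Fin n) := (Finset.Ico lo (lo + (r ^ 2 + 1))).attachFin hbound with hB
    have hBcard : B.card = r ^ 2 + 1 := by
      rw [hB, Finset.card_attachFin, Nat.card_Ico]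
      omega
    -- each vertex of B has a color appearing at least twice into W'
    have hpick : ∀ v : Fin n, v ∈ B →
        ∃ q : Fin r, 1 < (W'.filter fun x => c s(v, x) = q).card := by
      intro v _
      have hlt : (Finset.univ : Finset (Fin r)).card < W'.card := by
        rw [Finset.card_univ, Fintype.card_fin]
        omega
      obtain ⟨x₁, hx₁, x₂, hx₂, hne, heq⟩ :=
        Finset.exists_ne_map_eq_of_card_lt_of_maps_to hlt
          (fun x _ => Finset.mem_univ (c s(v, x)))
      refine ⟨c s(v, x₂), Finset.one_lt_card.mpr ⟨x₁, ?_, x₂, ?_, hne⟩⟩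
      · exact Finset.mem_filter.mpr ⟨hx₁, heq⟩
      · exact Finset.mem_filter.mpr ⟨hx₂, rfl⟩
    have hpick' : ∀ v : Fin n, ∃ q : Fin r,
        (v ∈ B → 1 < (W'.filter fun x => c s(v, x) = q).card) := by
      intro v
      by_cases hv : v ∈ B
      · obtain ⟨q, hq⟩ := hpick v hv
        exact ⟨q, fun _ => hq⟩
      · exact ⟨⟨0, hr⟩, fun h => absurd h hv⟩
    choose φ hφ using hpick'
    -- pigeonhole on the fibers of φ
    obtain ⟨q, -, hq⟩ :=
      Finset.exists_lt_card_fiber_of_mul_lt_card_of_maps_to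
        (f := φ) (s := B) (t := Finset.univ) (n := r) (fun a _ => Finset.mem_univ (φ a))
        (by
          rw [Finset.card_univ, Fintype.card_fin, hBcard, pow_two]
          omega)
    refine ⟨B.filter fun v => φ v = q, ?_, ?_, ?_⟩
    · intro x hx
      have hxB := (Finset.mem_filter.mp hx).1
      exact Finset.mem_Ico.mp ((Finset.mem_attachFin _).mp hxB)
    · omega
    · intro v hv v' hv' hvv'
      have hvB := (Finset.mem_filter.mp hv).1
      have hvq := (Finset.mem_filter.mp hv).2
      have hv'B := (Finset.mem_filter.mp hv').1
      have hv'q := (Finset.mem_filter.mp hv').2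
      have hfv : 1 < (W'.filter fun x => c s(v, x) = q).card := by
        have := hφ v hvB; rwa [hvq] at this
      have hfv' : 1 < (W'.filter fun x => c s(v', x) = q).card := by
        have := hφ v' hv'B; rwa [hv'q] at this
      obtain ⟨x, hx⟩ := Finset.card_pos.mp (by omega :
        0 < (W'.filter fun x => c s(v, x) = q).card)
      obtain ⟨y, hy, hyx⟩ := Finset.exists_mem_ne hfv' x
      have hxW' : x ∈ W' := (Finset.mem_filter.mp hx).1
      have hcx : c s(v, x) = q := (Finset.mem_filter.mp hx).2
      have hyW' : y ∈ W' := (Finset.mem_filter.mp hy).1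
      have hcy : c s(v', y) = q := (Finset.mem_filter.mp hy).2
      obtain ⟨f', g', hf', hg', hdisj', hf0, hg0, hcol'⟩ :=
        hW'pair x hxW' y hyW' (Ne.symm hyx)
      -- position facts
      have hvlt : (v : ℕ) < lo + (r ^ 2 + 1) :=
        (Finset.mem_Ico.mp ((Finset.mem_attachFin _).mp hvB)).2
      have hv'lt : (v' : ℕ) < lo + (r ^ 2 + 1) :=
        (Finset.mem_Ico.mp ((Finset.mem_attachFin _).mp hv'B)).2
      have hflow : ∀ i, lo + (r ^ 2 + 1) ≤ (f' i : ℕ) := by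
        intro i
        have h1 : f' ⟨0, hk⟩ ≤ f' i := hf'.monotone (by simp [Fin.le_def])
        have h2 : lo + (r ^ 2 + 1) ≤ (x : ℕ) := (hW'pos x hxW').1
        have := Fin.le_def.mp h1
        rw [hf0] at h1
        have := Fin.le_def.mp h1
        omega
      have hglow : ∀ i, lo + (r ^ 2 + 1) ≤ (g' i : ℕ) := by
        intro i
        have h1 : g' ⟨0, hk⟩ ≤ g' i := hg'.monotone (by simp [Fin.le_def])
        rw [hg0] at h1
        have h2 : lo + (r ^ 2 + 1) ≤ (y : ℕ) := (hW'pos y hyW').1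
        have := Fin.le_def.mp h1
        omega
      have hvf : ∀ i, v < f' i := by
        intro i
        rw [Fin.lt_def]
        have := hflow i
        omega
      have hvg : ∀ i, v < g' i := by
        intro i
        rw [Fin.lt_def]
        have := hglow i
        omega
      have hv'f : ∀ i, v' < f' i := by
        intro i
        rw [Fin.lt_def]
        have := hflow i
        omega
      have hv'g : ∀ i, v' < g' i := by
        intro i
        rw [Fin.lt_def]
        have := hglow i
        omega
      refine ⟨Fin.cons v f', Fin.cons v' g',
        finCons_strictMono hf' hvf, finCons_strictMono hg' hv'g, ?_, ?_, ?_, ?_⟩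
      · intro i j
        induction i using Fin.cases with
        | zero =>
          induction j using Fin.cases with
          | zero => simpa using hvv'
          | succ j' =>
            simp only [Fin.cons_zero, Fin.cons_succ]
            exact ne_of_lt (hvg j')
        | succ i' =>
          induction j using Fin.cases with
          | zero =>
            simp only [Fin.cons_zero, Fin.cons_succ]
            exact ne_of_gt (hv'f i')
          | succ j' =>
            simp only [Fin.cons_succ]
            exact hdisj' i' j'
      · have h0 : (⟨0, Nat.le_add_left 1 k⟩ : Fin (k + 1)) = 0 := by
          ext; simp
        rw [show (⟨0, by omega⟩ : Fin (k+1)) = 0 from by ext; simp]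
        exact Fin.cons_zero _ _
      · rw [show (⟨0, by omega⟩ : Fin (k+1)) = 0 from by ext; simp]
        exact Fin.cons_zero _ _
      · intro t h1
        match t with
        | 0 =>
          have e0 : (⟨0, Nat.lt_of_succ_lt h1⟩ : Fin (k + 1)) = 0 := by ext; simp
          have e1 : (⟨1, h1⟩ : Fin (k + 1)) = Fin.succ ⟨0, hk⟩ := rfl
          rw [e0, e1, Fin.cons_zero, Fin.cons_zero, Fin.cons_succ, Fin.cons_succ,
            hf0, hg0, hcx]
          rw [hcy]
        | Nat.succ s =>
          have h2 : s + 1 < k := by omega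
          have e1 : (⟨s + 1, Nat.lt_of_succ_lt h1⟩ : Fin (k + 1)) =
              Fin.succ ⟨s, Nat.lt_of_succ_lt h2⟩ := rfl
          have e2 : (⟨s + 1 + 1, h1⟩ : Fin (k + 1)) = Fin.succ ⟨s + 1, h2⟩ := rfl
          rw [e1, e2, Fin.cons_succ, Fin.cons_succ, Fin.cons_succ, Fin.cons_succ]
          exact hcol' s h2

private lemma image_orderEmb {m : ℕ} {f : Fin m → Fin n} (hf : StrictMono f)
    {t : ℕ} (h : t < (Finset.image f Finset.univ).card) (h' : t < m) :
    (Finset.image f Finset.univ).orderEmbOfFin rfl ⟨t, h⟩ = f ⟨t, h'⟩ := by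
  have hI : (Finset.image f Finset.univ).card = m := by
    rw [Finset.card_image_of_injective _ hf.injective, Finset.card_univ, Fintype.card_fin]
  have hu := Finset.orderEmbOfFin_unique (s := Finset.image f Finset.univ)
      (k := (Finset.image f Finset.univ).card) rfl
      (f := fun i => f (Fin.cast hI i))
      (fun i => Finset.mem_image_of_mem f (Finset.mem_univ _))
      (fun a b hab => hf hab)
  have := congrFun hu ⟨t, h⟩
  exact this.symm

private lemma exists_twin (hr : 1 ≤ r) (c : Sym2 (Fin n) → Fin r) :
    ∃ I J : Finset (Fin n), IsTwin c I J ∧ n / (r ^ 2 + 1) ≤ I.card := by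
  rcases Nat.eq_zero_or_pos (n / (r ^ 2 + 1)) with h0 | hpos
  · refine ⟨∅, ∅, ⟨Finset.disjoint_empty_left _, rfl, ?_⟩, ?_⟩
    · intro t ht _
      simp at ht
    · simp [h0]
  · have hlo : 0 + (n / (r ^ 2 + 1)) * (r ^ 2 + 1) ≤ n := by
      simpa using Nat.div_mul_le_self n (r ^ 2 + 1)
    obtain ⟨W, hWpos, hWcard, hWpair⟩ := twin_blocks hr c (n / (r ^ 2 + 1)) hpos 0 hlo
    have hW1 : 1 < W.card := by omega
    obtain ⟨v, hv, v', hv', hvv'⟩ := Finset.one_lt_card.mp hW1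
    obtain ⟨f, g, hf, hg, hdisj, hf0, hg0, hcol⟩ := hWpair v hv v' hv' hvv'
    have hIcard : (Finset.image f Finset.univ).card = n / (r ^ 2 + 1) := by
      rw [Finset.card_image_of_injective _ hf.injective, Finset.card_univ, Fintype.card_fin]
    have hJcard : (Finset.image g Finset.univ).card = n / (r ^ 2 + 1) := by
      rw [Finset.card_image_of_injective _ hg.injective, Finset.card_univ, Fintype.card_fin]
    refine ⟨Finset.image f Finset.univ, Finset.image g Finset.univ, ⟨?_, ?_, ?_⟩, ?_⟩
    · rw [Finset.disjoint_left]
      intro a ha hb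
      obtain ⟨i, -, rfl⟩ := Finset.mem_image.mp ha
      obtain ⟨j, -, hj⟩ := Finset.mem_image.mp hb
      exact hdisj i j hj.symm
    · rw [hIcard, hJcard]
    · intro t hI hJ
      have htm : t + 1 < n / (r ^ 2 + 1) := by rwa [hIcard] at hI
      rw [image_orderEmb hf (Nat.lt_of_succ_lt hI) (Nat.lt_of_succ_lt htm),
        image_orderEmb hf hI htm,
        image_orderEmb hg (Nat.lt_of_succ_lt hJ) (Nat.lt_of_succ_lt htm),
        image_orderEmb hg hJ htm]
      exact hcol t htm
    · rw [hIcard]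

end TwinAux

/-- Every `r`-edge-coloring of the complete graph on `[n]` has a twin of
size at least `⌊n / (r² + 1)⌋`; in particular `F_r(n) ≥ ⌊n / (r² + 1)⌋`. -/
theorem twin_lower_bound (r n : ℕ) (hr : 1 ≤ r) :
    (∀ c : Sym2 (Fin n) → Fin r,
      ∃ I J : Finset (Fin n), IsTwin c I J ∧ n / (r ^ 2 + 1) ≤ I.card) ∧
    n / (r ^ 2 + 1) ≤ Fgen n r := by
  refine ⟨fun c => exists_twin hr c, ?_⟩
  apply le_csInf
  · exact ⟨maxTwinSize (fun _ => (⟨0, hr⟩ : Fin r)), ⟨_, rfl⟩⟩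
  · rintro b ⟨c, rfl⟩
    obtain ⟨I, J, hT, hcard⟩ := exists_twin hr c
    refine le_trans hcard (le_csSup ⟨n, ?_⟩ ⟨I, J, hT, rfl⟩)
    rintro ℓ ⟨I', J', -, rfl⟩
    exact le_trans (Finset.card_le_univ I') (by simp)
end

section
/- For every positive integer n, every 2-edge-coloring c of the complete graph on [n] has a twin of size at least n/4 − 1; in particular F_2(n) ≥ n/4 − O(1). -/
/-!
We build twins from the top down, keeping a *twin triangle*: three vertices `z₀ < z₁ < z₂` such
that every ordered pair `(zᵤ, zᵥ)` starts a pair of twin sequences of length `k + 1`. Given four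
fresh vertices `w₀ < ⋯ < w₃` below the triangle, look at the `4 × 3` matrix of colors
`c(wᵢ, zᵤ)`. If three rows pairwise admit `u ≠ v` with `c(wᵢ, zᵤ) = c(wⱼ, zᵥ)`, prepending
`(wᵢ, wⱼ)` to the sequences of `(zᵤ, zᵥ)` gives a triangle of length `k + 2`. Otherwise two rows
are constantly `c(z₀, z₁)`, say those of `wᵢ < wⱼ`, and `{wᵢ, wⱼ, z₀}` is the new triangle,
obtained by prepending to the sequences of `(z₁, z₂)` and `(z₂, z₁)`. Four vertices per unit of
length, starting from any three vertices as a triangle of length `1`, yield twins of size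
about `n / 4`.
-/

open Finset

theorem orderEmbOfFin_image_univ {α : Type*} [LinearOrder α] {m : ℕ} {f : Fin m → α}
    (hf : StrictMono f) (hcard : #(univ.image f) = m) (i : Fin #(univ.image f)) :
    (univ.image f).orderEmbOfFin rfl i = f (i.cast hcard) :=
  (congrFun (orderEmbOfFin_unique rfl (fun _ => mem_image_of_mem f (mem_univ _))
    (hf.comp (Fin.cast_strictMono hcard))) i).symm

section Chains

variable {α β : Type*} [LinearOrder α]

structure TwinChain (c : Sym2 α → β) (k : ℕ) (a b : α) where
  f : Fin (k + 1) → α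
  g : Fin (k + 1) → α
  strictMono_f : StrictMono f
  strictMono_g : StrictMono g
  f_zero : f 0 = a
  g_zero : g 0 = b
  f_ne_g : ∀ i j, f i ≠ g j
  color_eq : ∀ i : Fin k, c s(f i.castSucc, f i.succ) = c s(g i.castSucc, g i.succ)

namespace TwinChain

variable {c : Sym2 α → β} {k : ℕ} {a b a' b' : α}

def single (hab : a ≠ b) : TwinChain c 0 a b where
  f _ := a
  g _ := b
  strictMono_f := Subsingleton.strictMono (α := Fin 1) _
  strictMono_g := Subsingleton.strictMono (α := Fin 1) _
  f_zero := rfl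
  g_zero := rfl
  f_ne_g _ _ := hab
  color_eq i := i.elim0

def swap (D : TwinChain c k a b) : TwinChain c k b a where
  f := D.g
  g := D.f
  strictMono_f := D.strictMono_g
  strictMono_g := D.strictMono_f
  f_zero := D.g_zero
  g_zero := D.f_zero
  f_ne_g i j h := D.f_ne_g j i h.symm
  color_eq i := (D.color_eq i).symm

theorem le_f (D : TwinChain c k a b) (i : Fin (k + 1)) : a ≤ D.f i :=
  D.f_zero.symm.trans_le (D.strictMono_f.monotone (Fin.zero_le i))

theorem le_g (D : TwinChain c k a b) (i : Fin (k + 1)) : b ≤ D.g i :=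
  D.swap.le_f i

def cons (D : TwinChain c k a' b') (hab : a ≠ b) (ha : a < min a' b') (hb : b < min a' b')
    (hc : c s(a, a') = c s(b, b')) : TwinChain c (k + 1) a b where
  f := Fin.cons a D.f
  g := Fin.cons b D.g
  strictMono_f := Fin.strictMono_cons.2
    ⟨fun j => (lt_min_iff.1 ha).1.trans_le (D.le_f j), D.strictMono_f⟩
  strictMono_g := Fin.strictMono_cons.2
    ⟨fun j => (lt_min_iff.1 hb).2.trans_le (D.le_g j), D.strictMono_g⟩
  f_zero := rfl
  g_zero := rfl
  f_ne_g i j := by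
    induction i using Fin.cases <;> induction j using Fin.cases
    · exact hab
    · exact ((lt_min_iff.1 ha).2.trans_le (D.le_g _)).ne
    · exact ((lt_min_iff.1 hb).1.trans_le (D.le_f _)).ne'
    · exact D.f_ne_g _ _
  color_eq i := by
    induction i using Fin.cases
    · simpa [D.f_zero, D.g_zero] using hc
    · simpa only [← Fin.succ_castSucc, Fin.cons_succ] using D.color_eq _

end TwinChain

def IsTwinTriangle (c : Sym2 α → β) (k : ℕ) (Z : Fin 3 → α) : Prop :=
  StrictMono Z ∧ ∀ u v, u ≠ v → Nonempty (TwinChain c k (Z u) (Z v))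

theorem isTwinTriangle_zero {c : Sym2 α → β} {Z : Fin 3 → α} (hZ : StrictMono Z) :
    IsTwinTriangle c 0 Z :=
  ⟨hZ, fun _ _ huv => ⟨.single (hZ.injective.ne huv)⟩⟩

theorem isTwinTriangle_of_chains {c : Sym2 α → β} {k : ℕ} {a b d : α} (hab : a < b)
    (hbd : b < d) (Dab : TwinChain c k a b) (Dad : TwinChain c k a d)
    (Dbd : TwinChain c k b d) : IsTwinTriangle c k ![a, b, d] := by
  refine ⟨by simp [strictMono_vecCons, hab, hbd], fun u v huv => ?_⟩
  fin_cases u <;> fin_cases v <;> first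
    | exact absurd rfl huv
    | exact ⟨Dab⟩ | exact ⟨Dad⟩ | exact ⟨Dbd⟩
    | exact ⟨Dab.swap⟩ | exact ⟨Dad.swap⟩ | exact ⟨Dbd.swap⟩

end Chains

section ColorMatrix

def CrossMatch {ι κ β : Type*} (M : ι → κ → β) (x y : ι) : Prop :=
  ∃ p q, p ≠ q ∧ M x p = M y q

theorem crossMatch_of_ne_const {ι : Type*} {M : ι → Fin 3 → Fin 2} {x y : ι} {γ : Fin 2}
    (hx : M x ≠ Function.const _ γ) (hy : M y ≠ Function.const _ γ) : CrossMatch M x y := by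
  -- two rows that do not cross-match are constant, of different colors
  have key : ∀ (r s : Fin 3 → Fin 2) (γ : Fin 2), r ≠ Function.const _ γ →
      s ≠ Function.const _ γ → ∃ p q, p ≠ q ∧ r p = s q := by
    decide
  exact key _ _ γ hx hy

theorem crossMatch_triangle_or_const_rows (M : Fin 4 → Fin 3 → Fin 2) :
    (∃ e : Fin 3 ↪o Fin 4, ∀ u v, u ≠ v → CrossMatch M (e u) (e v)) ∨
      ∀ γ, ∃ x y, x < y ∧ M x = Function.const _ γ ∧ M y = Function.const _ γ := by
  by_cases h : ∀ γ, 1 < #{x | M x = Function.const _ γ}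
  · refine Or.inr fun γ => ⟨_, _, min'_lt_max'_of_card _ (h γ), ?_, ?_⟩
    · exact (mem_filter.1 (min'_mem {x | M x = Function.const _ γ} _)).2
    · exact (mem_filter.1 (max'_mem {x | M x = Function.const _ γ} _)).2
  · left
    obtain ⟨γ, hγ⟩ := not_forall.1 h
    have hcard : 3 ≤ #{x | ¬M x = Function.const _ γ} := by
      have := card_filter_add_card_filter_not (s := univ) (fun x => M x = Function.const _ γ)
      simp only [card_univ, Fintype.card_fin] at this
      omega
    obtain ⟨t, hts, ht⟩ := exists_subset_card_eq hcard
    refine ⟨t.orderEmbOfFin ht, fun u v _ => crossMatch_of_ne_const (γ := γ) ?_ ?_⟩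
    · exact (mem_filter.1 (hts (t.orderEmbOfFin_mem ht u))).2
    · exact (mem_filter.1 (hts (t.orderEmbOfFin_mem ht v))).2

end ColorMatrix

section Growth

variable {α : Type*} [LinearOrder α] {c : Sym2 α → Fin 2} {k : ℕ}

theorem IsTwinTriangle.exists_succ {Z : Fin 3 → α} (hZ : IsTwinTriangle c k Z) {w : Fin 4 → α}
    (hw : StrictMono w) (hwZ : w 3 < Z 0) :
    ∃ Z', IsTwinTriangle c (k + 1) Z' ∧ w 0 ≤ Z' 0 := by
  have hbelow : ∀ i u, w i < Z u := fun i u =>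
    (hw.monotone (Fin.le_last i)).trans_lt (hwZ.trans_le (hZ.1.monotone (Fin.zero_le u)))
  have hbelow₂ : ∀ i u v, w i < min (Z u) (Z v) := fun i u v => lt_min (hbelow i u) (hbelow i v)
  rcases crossMatch_triangle_or_const_rows (fun i u => c s(w i, Z u)) with ⟨e, he⟩ | hconst
  · refine ⟨w ∘ e, ⟨hw.comp e.strictMono, fun u v huv => ?_⟩, hw.monotone (Fin.zero_le _)⟩
    obtain ⟨p, q, hpq, hcol⟩ := he u v huv
    obtain ⟨D⟩ := hZ.2 p q hpq
    exact ⟨D.cons (hw.injective.ne (e.injective.ne huv)) (hbelow₂ ..) (hbelow₂ ..) hcol⟩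
  · obtain ⟨x, y, hxy, hx, hy⟩ := hconst (c s(Z 0, Z 1))
    have hcx : ∀ u, c s(w x, Z u) = c s(Z 0, Z 1) := congrFun hx
    have hcy : ∀ u, c s(w y, Z u) = c s(Z 0, Z 1) := congrFun hy
    obtain ⟨D₁₂⟩ := hZ.2 1 2 (by decide)
    have hZ₀ : Z 0 < min (Z 2) (Z 1) := lt_min (hZ.1 (by decide)) (hZ.1 (by decide))
    refine ⟨_, isTwinTriangle_of_chains (hw hxy) (hbelow y 0)
      (D₁₂.cons (hw.injective.ne hxy.ne) (hbelow₂ ..) (hbelow₂ ..) ((hcx 1).trans (hcy 2).symm))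
      (D₁₂.swap.cons (hbelow x 0).ne (hbelow₂ ..) hZ₀ (hcx 2))
      (D₁₂.swap.cons (hbelow y 0).ne (hbelow₂ ..) hZ₀ (hcy 2)), hw.monotone (Fin.zero_le x)⟩

theorem exists_isTwinTriangle (c : Sym2 α → Fin 2) :
    ∀ (k : ℕ) (v : Fin (4 * k + 3) → α), StrictMono v →
      ∃ Z, IsTwinTriangle c k Z ∧ v 0 ≤ Z 0
  | 0, v, hv => ⟨v, isTwinTriangle_zero hv, le_rfl⟩
  | k + 1, v, hv => by
    obtain ⟨Z, hZ, hvZ⟩ := exists_isTwinTriangle c k (fun i => v ⟨i + 4, by omega⟩)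
      fun i j hij => hv (Fin.mk_lt_mk.2 (Nat.add_lt_add_right hij 4))
    exact hZ.exists_succ (w := fun i => v ⟨i, by omega⟩)
      (fun i j hij => hv (Fin.mk_lt_mk.2 hij)) ((hv (Fin.mk_lt_mk.2 (by omega))).trans_le hvZ)

end Growth

section Twins

variable {n r : ℕ}

theorem TwinChain.isTwin {c : Sym2 (Fin n) → Fin r} {k : ℕ} {a b : Fin n}
    (D : TwinChain c k a b) :
    IsTwin c (univ.image D.f) (univ.image D.g) ∧ #(univ.image D.f) = k + 1 := by
  have hf : #(univ.image D.f) = k + 1 := by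
    simp [card_image_of_injective _ D.strictMono_f.injective]
  have hg : #(univ.image D.g) = k + 1 := by
    simp [card_image_of_injective _ D.strictMono_g.injective]
  refine ⟨⟨?_, hf.trans hg.symm, fun t hI hJ => ?_⟩, hf⟩
  · simp only [disjoint_left, mem_image, mem_univ, true_and]
    rintro _ ⟨i, rfl⟩ ⟨j, hj⟩
    exact D.f_ne_g i j hj.symm
  · rw [orderEmbOfFin_image_univ D.strictMono_f hf, orderEmbOfFin_image_univ D.strictMono_f hf,
      orderEmbOfFin_image_univ D.strictMono_g hg, orderEmbOfFin_image_univ D.strictMono_g hg]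
    exact D.color_eq ⟨t, by omega⟩

theorem isTwin_empty (c : Sym2 (Fin n) → Fin r) : IsTwin c ∅ ∅ :=
  ⟨disjoint_empty_left _, rfl, fun _ h => absurd h (by simp)⟩

theorem exists_isTwin_card_eq (c : Sym2 (Fin n) → Fin 2) {k : ℕ} (hk : 4 * k + 3 ≤ n) :
    ∃ I J, IsTwin c I J ∧ #I = k + 1 := by
  obtain ⟨Z, hZ, -⟩ := exists_isTwinTriangle c k (Fin.castLE hk) (Fin.strictMono_castLE hk)
  obtain ⟨D⟩ := hZ.2 0 1 (by decide)
  exact ⟨_, _, D.isTwin⟩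

theorem exists_isTwin_quarter_sub_one_le_card (c : Sym2 (Fin n) → Fin 2) :
    ∃ I J, IsTwin c I J ∧ (n : ℝ) / 4 - 1 ≤ #I := by
  by_cases hn : 3 ≤ n
  · obtain ⟨I, J, hIJ, hI⟩ := exists_isTwin_card_eq c (k := (n - 3) / 4) (by omega)
    refine ⟨I, J, hIJ, ?_⟩
    have hn' : (n : ℝ) ≤ 4 * #I + 2 := by exact_mod_cast (by omega : n ≤ 4 * #I + 2)
    linarith
  · refine ⟨∅, ∅, isTwin_empty c, ?_⟩
    have hn' : (n : ℝ) ≤ 2 := by exact_mod_cast (by omega : n ≤ 2)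
    simp only [card_empty, Nat.cast_zero]
    linarith

theorem card_le_maxTwinSize {c : Sym2 (Fin n) → Fin r} {I J : Finset (Fin n)}
    (h : IsTwin c I J) : #I ≤ maxTwinSize c := by
  refine le_csSup ?_ ⟨I, J, h, rfl⟩
  exact ⟨n, by rintro _ ⟨I', -, -, rfl⟩; simpa using I'.card_le_univ⟩

theorem exists_maxTwinSize_eq_Fgen (n r : ℕ) :
    ∃ c : Sym2 (Fin n) → Fin (r + 1), maxTwinSize c = Fgen n (r + 1) :=
  Nat.sInf_mem (s := {m | ∃ c : Sym2 (Fin n) → Fin (r + 1), maxTwinSize c = m})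
    ⟨_, fun _ => 0, rfl⟩

end Twins

theorem twin_lower_bound_two_colors_general (n : ℕ) :
    (∀ c : Sym2 (Fin n) → Fin 2,
      ∃ I J : Finset (Fin n), IsTwin c I J ∧ (n : ℝ) / 4 - 1 ≤ (I.card : ℝ)) ∧
    (n : ℝ) / 4 - 1 ≤ (Fgen n 2 : ℝ) := by
  refine ⟨exists_isTwin_quarter_sub_one_le_card, ?_⟩
  obtain ⟨c, hc⟩ := exists_maxTwinSize_eq_Fgen n 1
  obtain ⟨I, J, hIJ, hI⟩ := exists_isTwin_quarter_sub_one_le_card c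
  calc (n : ℝ) / 4 - 1 ≤ #I := hI
    _ ≤ maxTwinSize c := by exact_mod_cast card_le_maxTwinSize hIJ
    _ = Fgen n 2 := by rw [hc]

/-- Every 2-edge-coloring of the complete graph on `[n]` has a twin of size
at least `n/4 − 1`; in particular `F_2(n) ≥ n/4 − O(1)`. -/
theorem twin_lower_bound_two_colors (n : ℕ) (hn : 1 ≤ n) :
    (∀ c : Sym2 (Fin n) → Fin 2,
      ∃ I J : Finset (Fin n), IsTwin c I J ∧ (n : ℝ) / 4 - 1 ≤ (I.card : ℝ)) ∧
    (n : ℝ) / 4 - 1 ≤ (Fgen n 2 : ℝ) :=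
  twin_lower_bound_two_colors_general n
end

section
/- Let r, k ≥ 1 be integers, and let A, B be disjoint finite sets with |A| = r + 1 and |B| = rk + 1. For every coloring c : A × B → [r] of the edges of the complete bipartite graph between A and B, there exists a subset B' ⊆ B with |B'| ≥ k + 1 such that for every pair of distinct b_1, b_2 ∈ B' there exist distinct a_1, a_2 ∈ A with c(a_1, b_1) = c(a_2, b_2). -/
/-- matchability lemma. Let `r, k ≥ 1` and let `A, B` be disjoint finite
sets with `|A| = r + 1`, `|B| = rk + 1`. For any `r`-coloring `c` of the edges of the
complete bipartite graph between `A` and `B` there is `B' ⊆ B` with `|B'| ≥ k + 1` such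
that every pair of distinct `b₁, b₂ ∈ B'` is `c`-matchable with `A`. -/
theorem matchability_lemma {V : Type*} (r k : ℕ) (hr : 1 ≤ r) (hk : 1 ≤ k)
    (A B : Finset V) (hAB : Disjoint A B)
    (hA : A.card = r + 1) (hB : B.card = r * k + 1)
    (c : V → V → Fin r) :
    ∃ B' ⊆ B, k + 1 ≤ B'.card ∧
      ∀ b₁ ∈ B', ∀ b₂ ∈ B', b₁ ≠ b₂ →
        ∃ a₁ ∈ A, ∃ a₂ ∈ A, a₁ ≠ a₂ ∧ c a₁ b₁ = c a₂ b₂ := by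
  classical
  -- each b has a repeated color among A
  have key : ∀ b : V, ∃ x : Fin r, ∃ a ∈ A, ∃ a' ∈ A, a ≠ a' ∧ c a b = x ∧ c a' b = x := by
    intro b
    have hlt : (Finset.univ : Finset (Fin r)).card < A.card := by
      simp [hA]
    have := Finset.exists_ne_map_eq_of_card_lt_of_maps_to hlt
      (f := fun a => c a b) (fun a _ => Finset.mem_univ _)
    obtain ⟨a, ha, a', ha', hne, heq⟩ := this
    exact ⟨c a b, a, ha, a', ha', hne, rfl, heq.symm⟩
  set g : V → Fin r := fun b => (key b).choose with hg
  have gspec : ∀ b : V, ∃ a ∈ A, ∃ a' ∈ A, a ≠ a' ∧ c a b = g b ∧ c a' b = g b :=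
    fun b => (key b).choose_spec
  -- pigeonhole over B
  have hmul : (Finset.univ : Finset (Fin r)).card * k < B.card := by
    simp [hB]
  obtain ⟨x, -, hx⟩ := Finset.exists_lt_card_fiber_of_mul_lt_card_of_maps_to
    (f := g) (fun b _ => Finset.mem_univ _) hmul
  refine ⟨B.filter (fun b => g b = x), Finset.filter_subset _ _, hx, ?_⟩
  intro b₁ hb₁ b₂ hb₂ hne
  have hx₁ : g b₁ = x := (Finset.mem_filter.mp hb₁).2
  have hx₂ : g b₂ = x := (Finset.mem_filter.mp hb₂).2
  obtain ⟨a, ha, a', ha', haa, h1, h2⟩ := gspec b₁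
  obtain ⟨d, hd, d', hd', hdd, h3, h4⟩ := gspec b₂
  by_cases h : a = d
  · exact ⟨a, ha, d', hd', by rw [h]; exact hdd, by rw [h1, h4, hx₁, hx₂]⟩
  · exact ⟨a, ha, d, hd, h, by rw [h1, h3, hx₁, hx₂]⟩
end

section
/- For all integers r ≥ 1 and 1 ≤ k ≤ r, the number of pairs of permutations (π, π') ∈ S_r × S_r with LCS(π, π') ≥ k is at most (r!)² · C(r,k) / k!, where C(r,k) is the binomial coefficient. Equivalently, if π, π' ∈ S_r are chosen independently and uniformly at random, then P(LCS(π, π') ≥ k) ≤ C(r,k)/k!. -/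
/-! If `LCS(π, π') ≥ k`, some pair `(A, B)` of `k`-subsets of `[r]` satisfies
`π(a_t) = π'(b_t)` for all `t`. There are `C(r,k)²` such pairs, and for a fixed pair and a fixed `π`
the condition prescribes `π'` on `k` points, leaving `(r - k)!` choices. The union bound gives
`C(r,k)² · r! · (r - k)! = (r!)² · C(r,k) / k!`. -/

/-- `LCS(π, π')`: the length of a longest common subsequence of the permutations
`π, π'` of `[r]`, i.e. the largest `ℓ` for which there are `A = {a_1 < … < a_ℓ}` and
`B = {b_1 < … < b_ℓ}` (not necessarily disjoint) with `π(a_t) = π'(b_t)` for all `t`. -/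
noncomputable def permLCS {r : ℕ} (π π' : Equiv.Perm (Fin r)) : ℕ :=
  sSup {ℓ : ℕ | ∃ a b : Fin ℓ → Fin r, StrictMono a ∧ StrictMono b ∧
    ∀ t : Fin ℓ, π (a t) = π' (b t)}

open Equiv Finset Function
open scoped Nat

namespace Equiv.Perm

variable {ι α : Type*} [Fintype ι] [Fintype α] [DecidableEq α]

/- The permutations with `σ ∘ a = b` form a left coset of the pointwise stabiliser of `range a`,
which is the symmetric group of its complement. -/
theorem card_extending_pair {a b : ι → α} (ha : Injective a) (hb : Injective b) :
    Fintype.card {σ : Perm α // ∀ i, σ (a i) = b i} = (Fintype.card α - Fintype.card ι)! := by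
  obtain ⟨σ₀, hσ₀⟩ := exists_extending_pair a b ha hb
  have hfix (σ : Perm α) :
      (∀ i, σ (a i) = b i) ↔ ∀ x, ¬x ∉ Set.range a → (σ₀⁻¹ * σ) x = x := by
    simp [Equiv.symm_apply_eq, hσ₀]
  let e : {σ : Perm α // ∀ i, σ (a i) = b i} ≃ Perm {x // x ∉ Set.range a} :=
    (subtypeEquiv (Equiv.mulLeft σ₀⁻¹) hfix).trans (Perm.subtypeEquivSubtypePerm _).symm
  rw [Fintype.card_congr e, Fintype.card_perm, Fintype.card_subtype_compl,
    Fintype.card_congr (Equiv.ofInjective a ha).symm]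

theorem card_pairs_comp_eq_comp {a b : ι → α} (ha : Injective a) (hb : Injective b) :
    #{p : Perm α × Perm α | ∀ i, p.1 (a i) = p.2 (b i)} =
      (Fintype.card α)! * (Fintype.card α - Fintype.card ι)! := by
  have hfiber (σ : Perm α) :
      Fintype.card {τ : Perm α // ∀ i, σ (a i) = τ (b i)} =
        (Fintype.card α - Fintype.card ι)! := by
    simp_rw [eq_comm (a := σ _)]
    exact card_extending_pair hb (σ.injective.comp ha)
  rw [← Fintype.card_subtype,
    Fintype.card_congr (subtypeProdEquivSigmaSubtype fun σ τ : Perm α => ∀ i, σ (a i) = τ (b i)),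
    Fintype.card_sigma]
  simp [hfiber, Fintype.card_perm]

end Equiv.Perm

theorem Fintype.card_orderEmbedding_fin (k r : ℕ) :
    Fintype.card (Fin k ↪o Fin r) = r.choose k := by
  rw [Fintype.card_eq_nat_card, Nat.card_congr Set.powersetCard.ofFinEmbEquiv,
    Set.powersetCard.card, Nat.card_fin]

theorem exists_orderEmbedding_of_le_permLCS {r k : ℕ} {π π' : Perm (Fin r)}
    (h : k ≤ permLCS π π') : ∃ a b : Fin k ↪o Fin r, ∀ t, π (a t) = π' (b t) := by
  set S := {ℓ : ℕ | ∃ a b : Fin ℓ → Fin r, StrictMono a ∧ StrictMono b ∧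
    ∀ t : Fin ℓ, π (a t) = π' (b t)}
  have hS : S.Nonempty :=
    ⟨0, Fin.elim0, Fin.elim0, fun x => x.elim0, fun x => x.elim0, fun t => t.elim0⟩
  have hbdd : BddAbove S := ⟨r, fun ℓ ⟨a, _, ha, _⟩ => by
    simpa using Fintype.card_le_of_injective a ha.injective⟩
  obtain ⟨a, b, ha, hb, hab⟩ := Nat.sSup_mem hS hbdd
  have h : k ≤ sSup S := h
  exact ⟨(Fin.castLEOrderEmb h).trans (OrderEmbedding.ofStrictMono a ha),
    (Fin.castLEOrderEmb h).trans (OrderEmbedding.ofStrictMono b hb), fun t => hab _⟩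

theorem card_filter_le_permLCS_le (r k : ℕ) :
    #{p : Perm (Fin r) × Perm (Fin r) | k ≤ permLCS p.1 p.2} ≤
      r.choose k ^ 2 * (r ! * (r - k)!) := by
  let common (ab : (Fin k ↪o Fin r) × (Fin k ↪o Fin r)) : Finset (Perm (Fin r) × Perm (Fin r)) :=
    {p | ∀ t, p.1 (ab.1 t) = p.2 (ab.2 t)}
  have hcover : ({p | k ≤ permLCS p.1 p.2} : Finset (Perm (Fin r) × Perm (Fin r))) ⊆
      univ.biUnion common := by
    intro p hp
    obtain ⟨a, b, hab⟩ := exists_orderEmbedding_of_le_permLCS (mem_filter.1 hp).2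
    exact mem_biUnion.2 ⟨(a, b), mem_univ _, mem_filter.2 ⟨mem_univ _, hab⟩⟩
  have hcommon (ab) : #(common ab) = r ! * (r - k)! := by
    convert Perm.card_pairs_comp_eq_comp ab.1.injective ab.2.injective using 3 <;>
      simp only [Fintype.card_fin]
  calc _ ≤ #(univ.biUnion common) := card_le_card hcover
    _ ≤ #(univ : Finset ((Fin k ↪o Fin r) × (Fin k ↪o Fin r))) * (r ! * (r - k)!) :=
        card_biUnion_le_card_mul _ _ _ fun ab _ => (hcommon ab).le
    _ = r.choose k ^ 2 * (r ! * (r - k)!) := by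
        rw [card_univ, Fintype.card_prod, Fintype.card_orderEmbedding_fin, sq]

open Classical in
theorem count_pairs_large_LCS_general (r k : ℕ) (hkr : k ≤ r) :
    ((Finset.univ.filter fun p : Equiv.Perm (Fin r) × Equiv.Perm (Fin r) =>
        k ≤ permLCS p.1 p.2).card : ℝ) ≤
      (r.factorial : ℝ) ^ 2 * (r.choose k) / (k.factorial : ℝ) := by
  have hfact : r.choose k ^ 2 * (r ! * (r - k)!) * k ! = r ! ^ 2 * r.choose k := by
    rw [← Nat.choose_mul_factorial_mul_factorial hkr]; ring
  rw [le_div_iff₀ (by positivity)]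
  exact_mod_cast (Nat.mul_le_mul_right _ (card_filter_le_permLCS_le r k)).trans_eq hfact

open Classical in
/-- For `1 ≤ k ≤ r`, the number of pairs `(π, π') ∈ S_r × S_r` with
`LCS(π, π') ≥ k` is at most `(r!)² · C(r,k) / k!`. -/
theorem count_pairs_large_LCS (r k : ℕ) (hk : 1 ≤ k) (hkr : k ≤ r) :
    ((Finset.univ.filter fun p : Equiv.Perm (Fin r) × Equiv.Perm (Fin r) =>
        k ≤ permLCS p.1 p.2).card : ℝ) ≤
      (r.factorial : ℝ) ^ 2 * (r.choose k) / (k.factorial : ℝ) :=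
  count_pairs_large_LCS_general r k hkr
end

section
/- If π, π' ∈ S_r are chosen independently and uniformly at random, then P(LCS(π, π') > 3√r) ≤ r^{−ω(1)}; that is, for every constant C > 0 there exists r_0 such that for all r ≥ r_0, the probability that LCS(π, π') > 3√r is at most r^{−C}. -/
open Finset Nat Real Filter

open Classical in
theorem card_strictMono_fin_le_choose {α : Type*} [Fintype α] [LinearOrder α] (k : ℕ) :
    #{f : Fin k → α | StrictMono f} ≤ (Fintype.card α).choose k := by
  rw [← Finset.card_univ, ← card_powersetCard]
  refine card_le_card_of_injOn (fun f ↦ univ.image f) (fun f hf ↦ ?_) fun f hf g hg hfg ↦ ?_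
  · replace hf : StrictMono f := by simpa using hf
    simp [mem_powersetCard, card_image_of_injective _ hf.injective]
  · refine Set.range_injOn_strictMono (by simpa using hf) (by simpa using hg) ?_
    simpa using congrArg (fun s : Finset α ↦ (s : Set α)) hfg

theorem card_perm_apply_eq_le {ι α : Type*} [Fintype ι] [Fintype α] [DecidableEq α]
    {a b : ι → α} (ha : a.Injective) (hb : b.Injective) :
    #{σ : Equiv.Perm α | ∀ i, σ (a i) = b i} ≤ (Fintype.card α - Fintype.card ι)! := by
  have maps_compl (σ : {σ : Equiv.Perm α // ∀ i, σ (a i) = b i}) (x : ↥(Set.range a)ᶜ) :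
      σ.1 x ∈ (Set.range b)ᶜ := by
    rintro ⟨i, hi⟩
    exact x.2 ⟨i, σ.1.injective ((σ.2 i).trans hi)⟩
  let restrict (σ : {σ : Equiv.Perm α // ∀ i, σ (a i) = b i}) :
      ↥(Set.range a)ᶜ ↪ ↥(Set.range b)ᶜ :=
    ⟨fun x ↦ ⟨σ.1 x, maps_compl σ x⟩,
      fun x y h ↦ Subtype.ext (σ.1.injective (congrArg Subtype.val h))⟩
  have restrict_injective : restrict.Injective := by
    rintro ⟨σ, hσ⟩ ⟨τ, hτ⟩ h
    ext1; ext x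
    by_cases hx : x ∈ Set.range a
    · obtain ⟨i, rfl⟩ := hx
      rw [hσ i, hτ i]
    · exact congrArg (fun e ↦ ((e ⟨x, hx⟩ : α))) h
  calc #{σ : Equiv.Perm α | ∀ i, σ (a i) = b i}
      = Fintype.card {σ : Equiv.Perm α // ∀ i, σ (a i) = b i} := (Fintype.card_subtype _).symm
    _ ≤ Fintype.card (↥(Set.range a)ᶜ ↪ ↥(Set.range b)ᶜ) :=
        Fintype.card_le_of_injective restrict restrict_injective
    _ = (Fintype.card α - Fintype.card ι)! := by
        rw [Fintype.card_embedding_eq, Fintype.card_compl_set, Fintype.card_compl_set,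
          Set.card_range_of_injective ha, Set.card_range_of_injective hb, Nat.descFactorial_self]

theorem card_perm_pair_apply_eq_le {ι α : Type*} [Fintype ι] [Fintype α] [DecidableEq α]
    {a b : ι → α} (ha : a.Injective) (hb : b.Injective) :
    #{p : Equiv.Perm α × Equiv.Perm α | ∀ i, p.1 (a i) = p.2 (b i)} ≤
      (Fintype.card α)! * (Fintype.card α - Fintype.card ι)! := by
  calc #{p : Equiv.Perm α × Equiv.Perm α | ∀ i, p.1 (a i) = p.2 (b i)}
      = ∑ τ : Equiv.Perm α, #{σ : Equiv.Perm α | ∀ i, σ (a i) = τ (b i)} := by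
        simp only [card_filter]
        exact Fintype.sum_prod_type_right _
    _ ≤ ∑ _τ : Equiv.Perm α, (Fintype.card α - Fintype.card ι)! :=
        sum_le_sum fun τ _ ↦ card_perm_apply_eq_le ha (τ.injective.comp hb)
    _ = (Fintype.card α)! * (Fintype.card α - Fintype.card ι)! := by
        simp [Fintype.card_perm]

open Classical in
theorem card_commonSubseq_le {α : Type*} [Fintype α] [LinearOrder α] (ℓ : ℕ) :
    #{p : Equiv.Perm α × Equiv.Perm α | ∃ a b : Fin ℓ → α, StrictMono a ∧ StrictMono b ∧
        ∀ t, p.1 (a t) = p.2 (b t)} ≤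
      (Fintype.card α).choose ℓ ^ 2 * ((Fintype.card α)! * (Fintype.card α - ℓ)!) := by
  set T := ({f : Fin ℓ → α | StrictMono f} : Finset _)
  calc _ ≤ #((T ×ˢ T).biUnion fun ab ↦
          ({p : Equiv.Perm α × Equiv.Perm α | ∀ t, p.1 (ab.1 t) = p.2 (ab.2 t)} : Finset _)) := by
        refine card_le_card fun p hp ↦ ?_
        obtain ⟨a, b, ha, hb, hab⟩ := (mem_filter.1 hp).2
        exact mem_biUnion.2 ⟨(a, b), by simp [T, ha, hb], by simpa using hab⟩
    _ ≤ #(T ×ˢ T) * ((Fintype.card α)! * (Fintype.card α - ℓ)!) := by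
        refine card_biUnion_le_card_mul _ _ _ fun ab hab ↦ ?_
        simp only [T, mem_product, mem_filter, mem_univ, true_and] at hab
        convert card_perm_pair_apply_eq_le hab.1.injective hab.2.injective using 3
        rw [Fintype.card_fin]
    _ ≤ _ := by
        rw [card_product, ← sq]
        gcongr
        exact card_strictMono_fin_le_choose ℓ

theorem exists_commonSubseq_of_le_permLCS {r ℓ : ℕ} {σ τ : Equiv.Perm (Fin r)}
    (h : ℓ ≤ permLCS σ τ) :
    ∃ a b : Fin ℓ → Fin r, StrictMono a ∧ StrictMono b ∧ ∀ t, σ (a t) = τ (b t) := by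
  let S : Set ℕ := {m | ∃ a b : Fin m → Fin r, StrictMono a ∧ StrictMono b ∧
    ∀ t, σ (a t) = τ (b t)}
  have bdd : BddAbove S := ⟨r, fun m ⟨a, _, ha, _⟩ ↦ by
    simpa using Fintype.card_le_of_injective a ha.injective⟩
  have ne : S.Nonempty :=
    ⟨0, Fin.elim0, Fin.elim0, fun i ↦ i.elim0, fun i ↦ i.elim0, fun i ↦ i.elim0⟩
  obtain ⟨a, b, ha, hb, hab⟩ := Nat.sSup_mem ne bdd
  exact ⟨a ∘ Fin.castLE h, b ∘ Fin.castLE h, ha.comp (Fin.strictMono_castLE h),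
    hb.comp (Fin.strictMono_castLE h), fun t ↦ hab _⟩

open Classical in
theorem card_le_permLCS_mul_factorial_le (r ℓ : ℕ) :
    #{p : Equiv.Perm (Fin r) × Equiv.Perm (Fin r) | ℓ ≤ permLCS p.1 p.2} * ℓ ! ≤
      r.choose ℓ * r ! ^ 2 := by
  have hcard : #{p : Equiv.Perm (Fin r) × Equiv.Perm (Fin r) | ℓ ≤ permLCS p.1 p.2} ≤
      r.choose ℓ ^ 2 * (r ! * (r - ℓ)!) := by
    refine (card_le_card fun p hp ↦ ?_).trans (by simpa using card_commonSubseq_le (α := Fin r) ℓ)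
    simpa using exists_commonSubseq_of_le_permLCS (mem_filter.1 hp).2
  have hfact : r.choose ℓ * ℓ ! * (r - ℓ)! ≤ r ! := by
    rcases le_or_gt ℓ r with h | h
    · exact (choose_mul_factorial_mul_factorial h).le
    · simp [choose_eq_zero_of_lt h]
  calc _ ≤ r.choose ℓ ^ 2 * (r ! * (r - ℓ)!) * ℓ ! := by gcongr
    _ = r.choose ℓ * r ! * (r.choose ℓ * ℓ ! * (r - ℓ)!) := by ring
    _ ≤ r.choose ℓ * r ! * r ! := by gcongr
    _ = r.choose ℓ * r ! ^ 2 := by ring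

theorem choose_div_factorial_le (n k : ℕ) :
    (n.choose k : ℝ) / k ! ≤ (exp 1 ^ 2 * n / k ^ 2) ^ k := by
  rcases k.eq_zero_or_pos with rfl | hk₀
  · simp
  have hk : (k : ℝ) ^ k / exp 1 ^ k ≤ k ! := by
    rw [div_le_iff₀ (by positivity), ← exp_nat_mul, mul_one, ← div_le_iff₀' (by positivity)]
    exact Real.pow_div_factorial_le_exp _ k.cast_nonneg k
  have hk₀' : (0 : ℝ) < k := Nat.cast_pos.2 hk₀
  calc (n.choose k : ℝ) / k ! ≤ n ^ k / k ! / k ! := by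
        gcongr; exact choose_le_pow_div k n
    _ = n ^ k / (k ! : ℝ) ^ 2 := by ring
    _ ≤ n ^ k / ((k : ℝ) ^ k / exp 1 ^ k) ^ 2 := by gcongr
    _ = (exp 1 ^ 2 * n / k ^ 2) ^ k := by
        rw [div_pow, div_pow, mul_pow, ← pow_mul, ← pow_mul, ← pow_mul, ← pow_mul]
        field_simp
        ring

theorem eventually_rpow_sqrt_le_rpow_neg {q C : ℝ} (hq₀ : 0 < q) (hq₁ : q < 1) (hC : 0 < C) :
    ∀ᶠ x : ℝ in atTop, q ^ √x ≤ x ^ (-C) := by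
  have hε : 0 < -log q / C := div_pos (neg_pos.2 (log_neg hq₀ hq₁)) hC
  filter_upwards [(isLittleO_log_rpow_atTop one_half_pos).bound hε, eventually_gt_atTop 0]
    with x hx hx₀
  rw [norm_eq_abs, norm_eq_abs, ← sqrt_eq_rpow, abs_of_nonneg (sqrt_nonneg x)] at hx
  rw [rpow_def_of_pos hq₀, rpow_def_of_pos hx₀, exp_le_exp]
  calc log q * √x = -(C * (-log q / C * √x)) := by field_simp
    _ ≤ -(C * log x) := by gcongr; exact (le_abs_self _).trans hx
    _ = log x * -C := by ring

theorem exp_one_sq_div_nine_lt_one : exp 1 ^ 2 / 9 < 1 := by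
  rw [div_lt_one (by norm_num)]
  nlinarith [exp_one_lt_d9, exp_pos 1]

theorem choose_div_factorial_le_rpow_sqrt {r ℓ : ℕ} (h : 3 * √r ≤ ℓ) :
    (r.choose ℓ : ℝ) / ℓ ! ≤ ((exp 1 ^ 2 / 9) ^ 3) ^ √r := by
  have hsq : 9 * (r : ℝ) ≤ ℓ ^ 2 := by
    nlinarith [sq_sqrt r.cast_nonneg, sqrt_nonneg r]
  calc (r.choose ℓ : ℝ) / ℓ ! ≤ (exp 1 ^ 2 * r / ℓ ^ 2) ^ ℓ := choose_div_factorial_le r ℓ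
    _ ≤ (exp 1 ^ 2 / 9) ^ ℓ := by
        gcongr ?_ ^ ℓ
        calc exp 1 ^ 2 * r / ℓ ^ 2 = exp 1 ^ 2 / 9 * (9 * r / ℓ ^ 2) := by ring
          _ ≤ exp 1 ^ 2 / 9 * 1 := by gcongr; exact div_le_one_of_le₀ hsq (sq_nonneg _)
          _ = exp 1 ^ 2 / 9 := mul_one _
    _ = (exp 1 ^ 2 / 9) ^ (ℓ : ℝ) := (rpow_natCast _ _).symm
    _ ≤ (exp 1 ^ 2 / 9) ^ (3 * √r) :=
        rpow_le_rpow_of_exponent_ge (by positivity) exp_one_sq_div_nine_lt_one.le h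
    _ = ((exp 1 ^ 2 / 9) ^ 3) ^ √r := by
        rw [rpow_mul (by positivity), rpow_ofNat]

open Classical in
/-- If `π, π' ∈ S_r` are independent uniformly random permutations then
`P(LCS(π, π') > 3√r) ≤ r^{−ω(1)}`: for every `C > 0` there is `r₀` such that for all
`r ≥ r₀` the proportion of pairs with `LCS(π, π') > 3√r` is at most `r^{−C}`. -/
theorem prob_LCS_large_superpolynomial :
    ∀ C : ℝ, 0 < C → ∃ r₀ : ℕ, ∀ r : ℕ, r₀ ≤ r →
      ((Finset.univ.filter fun p : Equiv.Perm (Fin r) × Equiv.Perm (Fin r) =>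
          (3 * Real.sqrt r : ℝ) < (permLCS p.1 p.2 : ℝ)).card : ℝ) ≤
        (r : ℝ) ^ (-C) * (r.factorial : ℝ) ^ 2 := by
  intro C hC
  have hq₁ : (exp 1 ^ 2 / 9) ^ 3 < 1 :=
    pow_lt_one₀ (by positivity) exp_one_sq_div_nine_lt_one three_ne_zero
  obtain ⟨r₀, hr₀⟩ := eventually_atTop.1 <| tendsto_natCast_atTop_atTop.eventually <|
    eventually_rpow_sqrt_le_rpow_neg (by positivity) hq₁ hC
  refine ⟨r₀, fun r hr ↦ ?_⟩
  set ℓ := ⌊3 * √r⌋₊ + 1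
  have hℓ : 3 * √r < ℓ := by push_cast [ℓ]; exact Nat.lt_floor_add_one _
  have hsub : #{p : Equiv.Perm (Fin r) × Equiv.Perm (Fin r) | 3 * √r < permLCS p.1 p.2} ≤
      #{p : Equiv.Perm (Fin r) × Equiv.Perm (Fin r) | ℓ ≤ permLCS p.1 p.2} := by
    refine card_le_card fun p hp ↦ ?_
    simp only [mem_filter, mem_univ, true_and] at hp ⊢
    exact Nat.floor_lt (by positivity) |>.2 hp
  have hcount : (#{p : Equiv.Perm (Fin r) × Equiv.Perm (Fin r) | ℓ ≤ permLCS p.1 p.2} : ℝ) ≤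
      r.choose ℓ / ℓ ! * r ! ^ 2 := by
    rw [div_mul_eq_mul_div, le_div_iff₀ (by positivity)]
    exact_mod_cast card_le_permLCS_mul_factorial_le r ℓ
  calc _ ≤ (#{p : Equiv.Perm (Fin r) × Equiv.Perm (Fin r) | ℓ ≤ permLCS p.1 p.2} : ℝ) :=
        mod_cast hsub
    _ ≤ r.choose ℓ / ℓ ! * r ! ^ 2 := hcount
    _ ≤ ((exp 1 ^ 2 / 9) ^ 3) ^ √r * r ! ^ 2 := by
        gcongr; exact choose_div_factorial_le_rpow_sqrt hℓ.le
    _ ≤ (r : ℝ) ^ (-C) * r ! ^ 2 := by gcongr; exact hr₀ r hr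
end

section
/- Let q ≥ 2 be an integer, let e_1, …, e_q be powers of 3 (i.e., e_t = 3^{m_t} for nonnegative integers m_t), and let a_1, …, a_q and b_1, …, b_q be nonnegative integers satisfying: a_t + b_t = e_t for all t ∈ [q]; b_1 = 0 and a_q = 0; and b_{t+1} = a_t with a_t > 0 for all t ∈ [q−1]. Then e_1 = e_q. (Equivalently: if e_1 ≠ e_q, no such sequences a, b exist.) -/
/-!
Write `e₁ = 3 ^ k`. By induction along the chain, every `a_t` with `t ∈ [q−1]` is divisible by
`3 ^ k` but not by `3 ^ (k + 1)`: since `a_t ≠ 0`, we get `3 ^ k ≤ a_t < a_t + a_{t+1} = e_{t+1}`,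
so both `3 ^ k` and `3 ^ (k + 1)` divide `e_{t+1}`, and hence divide `a_{t+1}` exactly when they
divide `a_t`. At the end of the chain `a_{q−1} = b_q = e_q`, and the only power of three that is
divisible by `3 ^ k` but not by `3 ^ (k + 1)` is `3 ^ k` itself.
-/

theorem dvd_left_iff_dvd_right_of_dvd_add {d x y : ℕ} (h : d ∣ x + y) : d ∣ x ↔ d ∣ y :=
  ⟨fun hx => (Nat.dvd_add_right hx).1 h, fun hy => (Nat.dvd_add_left hy).1 h⟩

theorem pow_dvd_and_not_pow_succ_dvd_of_add_eq_pow {n k j x y : ℕ} (hn : 1 < n)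
    (hxy : x + y = n ^ j) (hy : 0 < y) (hx : n ^ k ∣ x ∧ ¬ n ^ (k + 1) ∣ x) :
    n ^ k ∣ y ∧ ¬ n ^ (k + 1) ∣ y := by
  have hx0 : 0 < x := Nat.pos_of_ne_zero fun h => hx.2 (h ▸ dvd_zero _)
  have hkj : k < j := (Nat.pow_lt_pow_iff_right hn).1 <| calc
    n ^ k ≤ x := Nat.le_of_dvd hx0 hx.1
    _ < x + y := Nat.lt_add_of_pos_right hy
    _ = n ^ j := hxy
  have hdvd : ∀ i ≤ j, n ^ i ∣ x ↔ n ^ i ∣ y := fun i hi =>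
    dvd_left_iff_dvd_right_of_dvd_add (hxy ▸ Nat.pow_dvd_pow n hi)
  rwa [← hdvd k hkj.le, ← hdvd (k + 1) hkj]

theorem eq_of_pow_dvd_pow_and_not_pow_succ_dvd {n k j : ℕ} (hn : 1 < n)
    (h : n ^ k ∣ n ^ j ∧ ¬ n ^ (k + 1) ∣ n ^ j) : k = j := by
  rw [Nat.pow_dvd_pow_iff_le_right hn, Nat.pow_dvd_pow_iff_le_right hn] at h
  omega

theorem pow_dvd_and_not_pow_succ_dvd_chain {n q : ℕ} {m a b : Fin q → ℕ} (hn : 1 < n) (hq : 0 < q)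
    (hab : ∀ t : Fin q, a t + b t = n ^ m t) (hb0 : b ⟨0, hq⟩ = 0)
    (hchain : ∀ (t : ℕ) (h : t + 1 < q),
      b ⟨t + 1, h⟩ = a ⟨t, Nat.lt_of_succ_lt h⟩ ∧ 0 < a ⟨t, Nat.lt_of_succ_lt h⟩) :
    ∀ (t : ℕ) (ht : t + 1 < q),
      n ^ m ⟨0, hq⟩ ∣ a ⟨t, Nat.lt_of_succ_lt ht⟩ ∧
        ¬ n ^ (m ⟨0, hq⟩ + 1) ∣ a ⟨t, Nat.lt_of_succ_lt ht⟩
  | 0, _ => by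
    have ha0 : a ⟨0, hq⟩ = n ^ m ⟨0, hq⟩ := by simpa [hb0] using hab ⟨0, hq⟩
    rw [ha0, Nat.pow_dvd_pow_iff_le_right hn, Nat.pow_dvd_pow_iff_le_right hn]
    omega
  | t + 1, ht => by
    have hsum : a ⟨t, by omega⟩ + a ⟨t + 1, by omega⟩ = n ^ m ⟨t + 1, by omega⟩ := by
      rw [← (hchain t (by omega)).1, add_comm]
      exact hab _
    exact pow_dvd_and_not_pow_succ_dvd_of_add_eq_pow hn hsum (hchain (t + 1) ht).2
      (pow_dvd_and_not_pow_succ_dvd_chain hn hq hab hb0 hchain t (by omega))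

/-- Let `q ≥ 2`, let `e_t = 3 ^ (m t)` be powers of three, and let
`a, b : Fin q → ℕ` satisfy `a t + b t = e t` for all `t`, `b 1 = 0`, `a q = 0`, and
`b (t+1) = a t > 0` for all `t ∈ [q−1]`. Then `e 1 = e q`. -/
theorem power_of_three_chain (q : ℕ) (hq : 2 ≤ q) (m a b : Fin q → ℕ)
    (hab : ∀ t : Fin q, a t + b t = 3 ^ m t)
    (hb1 : b ⟨0, by omega⟩ = 0)
    (haq : a ⟨q - 1, by omega⟩ = 0)
    (hchain : ∀ (t : ℕ) (h : t + 1 < q),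
      b ⟨t + 1, h⟩ = a ⟨t, Nat.lt_of_succ_lt h⟩ ∧ 0 < a ⟨t, Nat.lt_of_succ_lt h⟩) :
    3 ^ m ⟨0, by omega⟩ = 3 ^ m ⟨q - 1, by omega⟩ := by
  have hlast : q - 2 + 1 < q := by omega
  have hidx : (⟨q - 2 + 1, hlast⟩ : Fin q) = ⟨q - 1, by omega⟩ := Fin.mk.inj_iff.2 (by omega)
  have hpen : a ⟨q - 2, by omega⟩ = 3 ^ m ⟨q - 1, by omega⟩ := by
    rw [← (hchain (q - 2) hlast).1, hidx, ← hab, haq, zero_add]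
  have hdvd := pow_dvd_and_not_pow_succ_dvd_chain (by norm_num) (by omega) hab hb1 hchain
    (q - 2) hlast
  rw [hpen] at hdvd
  rw [eq_of_pow_dvd_pow_and_not_pow_succ_dvd (by norm_num) hdvd]
end
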